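/- (Gelfond's exponential sum estimate) There is a constant C such that for all real α and all X > 2, |∑_{1 ≤ n ≤ X} ε(n) e(αn)| ≤ C X^λ, where λ = log 3 / log 4. -/

import Mathlib

open Complex Finset

/-- `e(x) = exp(2πix)`. -/
noncomputable def e (x : ℝ) : ℂ := Complex.exp (2 * Real.pi * Complex.I * x)

/-- `ε(n) = (-1)^(s₂ n)` where `s₂` is the binary digit sum. -/
def eps (n : ℕ) : ℤ := (-1) ^ ((Nat.digits 2 n).sum)

/-!
Put `T_N(z) = ∑_{n<N} ε(n) zⁿ`. From `ε(2n) = ε(n)` and `ε(2n+1) = -ε(n)` one gets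
`T_{2M}(z) = (1 - z) T_M(z²)`, so for `|z| ≤ 1` we have `|T_N(z)| ≤ |1 - z| |T_{⌊N/2⌋}(z²)| + 1`,
and unrolling, `|T_N(z)| ≤ ∑_{i<k} ∏_{j<i} |1 - z^{2^j}|` whenever `N < 2^k`.
On the unit circle every such product is `O(√3^i)`: two consecutive factors have product at
most `3`, or three consecutive factors have product at most `3√3`. Hence
`|T_N(z)| = O(√3^k) = O(N^λ)` with `2^k ≍ N`, and `e(αn) = e(α)ⁿ`.
-/

lemma eps_two_mul (n : ℕ) : eps (2 * n) = eps n := by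
  rcases n.eq_zero_or_pos with rfl | hn
  · rfl
  · simp [eps, Nat.digits_def' one_lt_two (by omega : 0 < 2 * n)]

lemma eps_two_mul_add_one (n : ℕ) : eps (2 * n + 1) = -eps n := by
  simp [eps, Nat.mul_add_div, pow_add]

lemma norm_eps_le {R : Type*} [SeminormedRing R] [NormOneClass R] (n : ℕ) : ‖(eps n : R)‖ ≤ 1 := by
  simpa [eps] using norm_pow_le (-1 : R) (Nat.digits 2 n).sum

section CommRing
variable {R : Type*} [CommRing R]

def thueMorseSum (N : ℕ) (z : R) : R :=
  ∑ n ∈ range N, (eps n : R) * z ^ n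

lemma thueMorseSum_two_mul (N : ℕ) (z : R) :
    thueMorseSum (2 * N) z = (1 - z) * thueMorseSum N (z ^ 2) := by
  induction N with
  | zero => simp [thueMorseSum]
  | succ N ih =>
    rw [show 2 * (N + 1) = 2 * N + 1 + 1 by ring]
    simp only [thueMorseSum] at ih ⊢
    rw [sum_range_succ, sum_range_succ, ih, sum_range_succ, eps_two_mul_add_one, eps_two_mul]
    push_cast
    ring

lemma sum_Icc_eq_thueMorseSum_sub_one (N : ℕ) (z : R) :
    ∑ n ∈ Icc 1 N, (eps n : R) * z ^ n = thueMorseSum (N + 1) z - 1 := by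
  rw [thueMorseSum, range_eq_Ico, sum_eq_sum_Ico_succ_bot N.zero_lt_succ, zero_add,
    Nat.succ_eq_add_one, Ico_add_one_right_eq_Icc]
  simp [eps]

end CommRing

section Normed
variable {R : Type*} [SeminormedCommRing R]

def doublingProd (i : ℕ) (z : R) : ℝ := ∏ j ∈ range i, ‖1 - z ^ 2 ^ j‖

lemma doublingProd_add (m i : ℕ) (z : R) :
    doublingProd (m + i) z = doublingProd m z * doublingProd i (z ^ 2 ^ m) := by
  simp only [doublingProd, prod_range_add, ← pow_mul, ← pow_add]

lemma doublingProd_succ (i : ℕ) (z : R) :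
    doublingProd (i + 1) z = ‖1 - z‖ * doublingProd i (z ^ 2) := by
  rw [add_comm, doublingProd_add]
  simp [doublingProd]

lemma doublingProd_zero (z : R) : doublingProd 0 z = 1 := prod_range_zero _

lemma doublingProd_nonneg (i : ℕ) (z : R) : 0 ≤ doublingProd i z :=
  prod_nonneg fun _ _ => norm_nonneg _

variable [NormOneClass R]

lemma norm_pow_le_one {z : R} (hz : ‖z‖ ≤ 1) (n : ℕ) : ‖z ^ n‖ ≤ 1 :=
  (norm_pow_le z n).trans (pow_le_one₀ (norm_nonneg z) hz)

lemma norm_thueMorseSum_le {z : R} (hz : ‖z‖ ≤ 1) (N : ℕ) :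
    ‖thueMorseSum N z‖ ≤ ‖1 - z‖ * ‖thueMorseSum (N / 2) (z ^ 2)‖ + 1 := by
  obtain ⟨M, rfl | rfl⟩ := N.even_or_odd'
  · rw [Nat.mul_div_cancel_left M two_pos, thueMorseSum_two_mul]
    exact (norm_mul_le _ _).trans (le_add_of_nonneg_right zero_le_one)
  · have hlast : ‖(eps (2 * M) : R) * z ^ (2 * M)‖ ≤ 1 :=
      (norm_mul_le _ _).trans (mul_le_one₀ (norm_eps_le _) (norm_nonneg _) (norm_pow_le_one hz _))
    rw [show (2 * M + 1) / 2 = M by omega, thueMorseSum, sum_range_succ, ← thueMorseSum,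
      thueMorseSum_two_mul]
    exact (norm_add_le _ _).trans (add_le_add (norm_mul_le _ _) hlast)

lemma doublingProd_le_two_pow {z : R} (hz : ‖z‖ ≤ 1) (i : ℕ) : doublingProd i z ≤ 2 ^ i := by
  refine (prod_le_prod (fun j _ => norm_nonneg _) fun j _ => ?_).trans_eq
    (by simp : ∏ _ ∈ range i, (2 : ℝ) = 2 ^ i)
  calc ‖1 - z ^ 2 ^ j‖ ≤ ‖(1 : R)‖ + ‖z ^ 2 ^ j‖ := norm_sub_le (1 : R) _
    _ ≤ 2 := by rw [norm_one]; linarith [norm_pow_le_one hz (2 ^ j)]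

lemma norm_thueMorseSum_le_sum_doublingProd {z : R} (hz : ‖z‖ ≤ 1) {k N : ℕ} (hN : N < 2 ^ k) :
    ‖thueMorseSum N z‖ ≤ ∑ i ∈ range k, doublingProd i z := by
  induction k generalizing N z with
  | zero => simp [Nat.lt_one_iff.1 hN, thueMorseSum]
  | succ k ih =>
    calc ‖thueMorseSum N z‖ ≤ ‖1 - z‖ * ‖thueMorseSum (N / 2) (z ^ 2)‖ + 1 :=
          norm_thueMorseSum_le hz N
      _ ≤ ‖1 - z‖ * ∑ i ∈ range k, doublingProd i (z ^ 2) + 1 := by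
          gcongr
          exact ih (norm_pow_le_one hz 2) (by rw [pow_succ] at hN; omega)
      _ = ∑ i ∈ range (k + 1), doublingProd i z := by
          simp only [sum_range_succ', doublingProd_succ, doublingProd_zero, mul_sum]

end Normed

/-- With `u = Re z` on the unit circle, these are `‖1 - z‖² ‖1 - z²‖²` and
`‖1 - z‖² ‖1 - z²‖² ‖1 - z⁴‖²`; both bounds are attained at `u = -1/2`. -/
lemma le_nine_or_le_twenty_seven {u : ℝ} (h1 : -1 ≤ u) (h2 : u ≤ 1) :
    (2 - 2 * u) ^ 2 * (2 + 2 * u) ≤ 9 ∨ (2 - 2 * u) ^ 3 * (2 + 2 * u) ^ 2 * (4 * u ^ 2) ≤ 27 := by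
  rcases le_or_gt u (-1 / 2) with hu | hu
  · left
    nlinarith [mul_nonneg (sub_nonneg.2 hu) (sq_nonneg (u - 1 / 2)),
      mul_nonneg (sub_nonneg.2 h1) (sq_nonneg (u + 1 / 2))]
  rcases le_or_gt 0 u with hu' | hu'
  · left
    nlinarith [mul_nonneg hu' (sq_nonneg (u - 1 / 2)), mul_nonneg hu' (sub_nonneg.2 h2)]
  · right
    have hmid := mul_nonneg (sub_nonneg.2 hu.le) (neg_nonneg.2 hu'.le)
    nlinarith [sq_nonneg (u + 1 / 2), sq_nonneg u, mul_nonneg hmid (sq_nonneg (u + 1 / 2))]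

namespace Complex

lemma norm_one_sub_sq_of_norm_eq_one {z : ℂ} (hz : ‖z‖ = 1) : ‖1 - z‖ ^ 2 = 2 - 2 * z.re := by
  have h := normSq_eq_norm_sq z
  rw [hz, normSq_apply] at h
  rw [← normSq_eq_norm_sq, normSq_apply]
  simp only [sub_re, one_re, sub_im, one_im]
  nlinarith

lemma norm_one_add_sq_of_norm_eq_one {z : ℂ} (hz : ‖z‖ = 1) : ‖1 + z‖ ^ 2 = 2 + 2 * z.re := by
  simpa using norm_one_sub_sq_of_norm_eq_one (z := -z) (by rwa [norm_neg])

end Complex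

open Complex in
lemma doublingProd_two_le_or_three_le {z : ℂ} (hz : ‖z‖ = 1) :
    doublingProd 2 z ≤ √3 ^ 2 ∨ doublingProd 3 z ≤ √3 ^ 3 := by
  have hre2 : (z ^ 2).re = 2 * z.re ^ 2 - 1 := by
    have h := normSq_eq_norm_sq z
    rw [hz, normSq_apply] at h
    rw [sq, mul_re]
    nlinarith
  have ha := norm_one_sub_sq_of_norm_eq_one hz
  have hb := norm_one_add_sq_of_norm_eq_one hz
  have hc : ‖1 + z ^ 2‖ ^ 2 = 4 * z.re ^ 2 := by
    rw [norm_one_add_sq_of_norm_eq_one (by rw [norm_pow, hz, one_pow]), hre2]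
    ring
  have h2 : ‖1 - z ^ 2‖ = ‖1 - z‖ * ‖1 + z‖ := by rw [← norm_mul]; ring_nf
  have h4 : ‖1 - z ^ 4‖ = ‖1 - z ^ 2‖ * ‖1 + z ^ 2‖ := by rw [← norm_mul]; ring_nf
  have hu := abs_re_le_norm z
  rw [hz, abs_le] at hu
  simp only [doublingProd, prod_range_succ, prod_range_zero, one_mul, pow_zero, pow_one,
    Nat.reducePow, h2, h4]
  rcases le_nine_or_le_twenty_seven hu.1 hu.2 with h | h
  · left
    refine abs_le_of_sq_le_sq' ?_ (by positivity) |>.2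
    calc _ = (‖1 - z‖ ^ 2) ^ 2 * ‖1 + z‖ ^ 2 := by ring
      _ ≤ 9 := by rw [ha, hb]; linarith
      _ = (√3 ^ 2) ^ 2 := by rw [Real.sq_sqrt (by norm_num)]; norm_num
  · right
    refine abs_le_of_sq_le_sq' ?_ (by positivity) |>.2
    calc _ = (‖1 - z‖ ^ 2) ^ 3 * (‖1 + z‖ ^ 2) ^ 2 * ‖1 + z ^ 2‖ ^ 2 := by ring
      _ ≤ 27 := by rw [ha, hb, hc]; linarith
      _ = (√3 ^ 2) ^ 3 := by rw [Real.sq_sqrt (by norm_num)]; norm_num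
      _ = (√3 ^ 3) ^ 2 := by ring

lemma doublingProd_le_sqrt_three_pow {z : ℂ} (hz : ‖z‖ = 1) (i : ℕ) :
    doublingProd i z ≤ 4 / 3 * √3 ^ i := by
  induction i using Nat.strong_induction_on generalizing z with
  | _ i ih =>
  rcases lt_or_ge i 3 with hi | hi
  · -- `4 / 3` is the least constant for which the trivial bound `2 ^ i` covers `i < 3`.
    refine (doublingProd_le_two_pow hz.le i).trans ?_
    interval_cases i
    · norm_num
    · linarith [Real.le_sqrt_of_sq_le (by norm_num : (3 / 2 : ℝ) ^ 2 ≤ 3)]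
    · rw [Real.sq_sqrt (by norm_num)]; norm_num
  obtain ⟨m, hm0, hm3, hm⟩ : ∃ m, 0 < m ∧ m ≤ 3 ∧ doublingProd m z ≤ √3 ^ m := by
    rcases doublingProd_two_le_or_three_le hz with h | h
    exacts [⟨2, two_pos, by norm_num, h⟩, ⟨3, three_pos, le_rfl, h⟩]
  obtain ⟨j, rfl⟩ : ∃ j, i = m + j := ⟨i - m, by omega⟩
  have hzm : ‖z ^ 2 ^ m‖ = 1 := by rw [norm_pow, hz, one_pow]
  calc doublingProd (m + j) z = doublingProd m z * doublingProd j (z ^ 2 ^ m) :=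
        doublingProd_add m j z
    _ ≤ √3 ^ m * (4 / 3 * √3 ^ j) :=
        mul_le_mul hm (ih j (by omega) hzm) (doublingProd_nonneg _ _) (by positivity)
    _ = 4 / 3 * √3 ^ (m + j) := by ring

lemma geom_sum_sqrt_three_le (k : ℕ) : ∑ i ∈ range k, 4 / 3 * √3 ^ i ≤ 2 * √3 ^ k := by
  have h3 : (5 / 3 : ℝ) ≤ √3 := Real.le_sqrt_of_sq_le (by norm_num)
  have hgeom := geom_sum_mul √3 k
  rw [← mul_sum]
  nlinarith [pow_nonneg (Real.sqrt_nonneg 3) k, sum_nonneg fun i (_ : i ∈ range k) =>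
    pow_nonneg (Real.sqrt_nonneg 3) i]

lemma norm_thueMorseSum_le_sqrt_three_pow {z : ℂ} (hz : ‖z‖ = 1) {k N : ℕ} (hN : N < 2 ^ k) :
    ‖thueMorseSum N z‖ ≤ 2 * √3 ^ k :=
  calc ‖thueMorseSum N z‖ ≤ ∑ i ∈ range k, doublingProd i z :=
        norm_thueMorseSum_le_sum_doublingProd hz.le hN
    _ ≤ ∑ i ∈ range k, 4 / 3 * √3 ^ i :=
        sum_le_sum fun i _ => doublingProd_le_sqrt_three_pow hz i
    _ ≤ 2 * √3 ^ k := geom_sum_sqrt_three_le k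

lemma two_rpow_logb_four_three : (2 : ℝ) ^ Real.logb 4 3 = √3 := by
  have h : ((2 : ℝ) ^ Real.logb 4 3) ^ 2 = 3 := by
    rw [Real.rpow_pow_comm zero_le_two]
    norm_num [Real.rpow_logb]
  rw [← Real.sqrt_sq (by positivity : (0 : ℝ) ≤ 2 ^ Real.logb 4 3), h]

lemma norm_thueMorseSum_le_rpow {z : ℂ} (hz : ‖z‖ = 1) (N : ℕ) :
    ‖thueMorseSum N z‖ ≤ 2 * √3 * (N : ℝ) ^ Real.logb 4 3 := by
  rcases N.eq_zero_or_pos with rfl | hN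
  · simp only [thueMorseSum, range_zero, sum_empty, norm_zero]
    positivity
  set k := Nat.log 2 N + 1
  have hk : (2 : ℝ) ^ k ≤ 2 * N := by
    rw [pow_succ, mul_comm]
    exact_mod_cast Nat.mul_le_mul_left 2 (Nat.pow_log_le_self 2 hN.ne')
  calc ‖thueMorseSum N z‖ ≤ 2 * √3 ^ k :=
        norm_thueMorseSum_le_sqrt_three_pow hz (Nat.lt_pow_succ_log_self one_lt_two N)
    _ = 2 * ((2 : ℝ) ^ k) ^ Real.logb 4 3 := by
        rw [← two_rpow_logb_four_three, Real.rpow_pow_comm zero_le_two]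
    _ ≤ 2 * (2 * N) ^ Real.logb 4 3 := by
        gcongr
        exact Real.logb_nonneg (by norm_num) (by norm_num)
    _ = 2 * √3 * (N : ℝ) ^ Real.logb 4 3 := by
        rw [Real.mul_rpow zero_le_two (Nat.cast_nonneg N), two_rpow_logb_four_three, mul_assoc]

lemma e_mul_natCast (α : ℝ) (n : ℕ) : e (α * n) = e α ^ n := by
  rw [e, e, ← Complex.exp_nat_mul]
  push_cast
  ring_nf

lemma norm_e (x : ℝ) : ‖e x‖ = 1 := by
  rw [e, show 2 * (Real.pi : ℂ) * I * x = (2 * Real.pi * x : ℝ) * I by push_cast; ring]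
  exact norm_exp_ofReal_mul_I _

theorem gelfond_exponential_sum : ∃ C : ℝ, ∀ (α X : ℝ), 2 < X →
    ‖∑ n ∈ Finset.Icc 1 ⌊X⌋₊, (eps n : ℂ) * e (α * n)‖ ≤
      C * X ^ (Real.log 3 / Real.log 4) := by
  refine ⟨7, fun α X hX => ?_⟩
  set N := ⌊X⌋₊
  have hNX : (N : ℝ) + 1 ≤ 2 * X := by linarith [Nat.floor_le (by linarith : 0 ≤ X)]
  have hlog : 0 ≤ Real.logb 4 3 := Real.logb_nonneg (by norm_num) (by norm_num)
  have hX1 : 1 ≤ X ^ Real.logb 4 3 := Real.one_le_rpow (by linarith) hlog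
  simp only [e_mul_natCast, sum_Icc_eq_thueMorseSum_sub_one, Real.log_div_log]
  calc ‖thueMorseSum (N + 1) (e α) - 1‖ ≤ ‖thueMorseSum (N + 1) (e α)‖ + 1 := by
        simpa using norm_sub_le (thueMorseSum (N + 1) (e α)) 1
    _ ≤ 2 * √3 * ((N : ℝ) + 1) ^ Real.logb 4 3 + 1 := by
        simpa using norm_thueMorseSum_le_rpow (norm_e α) (N + 1)
    _ ≤ 2 * √3 * (2 * X) ^ Real.logb 4 3 + X ^ Real.logb 4 3 := by gcongr
    _ = 7 * X ^ Real.logb 4 3 := by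
        rw [Real.mul_rpow zero_le_two (by linarith), two_rpow_logb_four_three, ← mul_assoc,
          mul_assoc 2, Real.mul_self_sqrt zero_le_three]
        ring
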